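/- Let p ∈ (0, 1) and θ ∈ [0, ∞) be real numbers. Suppose f : 𝒜 → 𝒜 satisfies ‖2 μ f((a+b)/2) + 2 μ f((a−b)/2) − 2 f(μ a) + f(c c* c) − f(c) c* c − c (f(c))* c − c c* f(c)‖ ≤ θ(‖a‖^p + ‖b‖^p + ‖c‖^p) for all μ ∈ 𝕋 and all a, b, c ∈ 𝒜. Then there exists a unique J*-derivation D : 𝒜 → 𝒜 such that ‖f(a) − D(a)‖ ≤ (2^p θ/(2 − 2^p)) ‖a‖^p for all a ∈ 𝒜, where D is obtained from the fixed point alternative as D(a) = lim_{n→∞} 2^{−n} f(2^n a). -/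

import Mathlib

open ContinuousLinearMap Filter

variable {H K : Type*} [NormedAddCommGroup H] [InnerProductSpace ℂ H] [CompleteSpace H]
  [NormedAddCommGroup K] [InnerProductSpace ℂ K] [CompleteSpace K]

/-- `𝒜` is closed under the `J*`-triple product `x ↦ x x* x`. -/
def JStarClosed (𝒜 : Submodule ℂ (H →L[ℂ] K)) : Prop :=
  ∀ x : H →L[ℂ] K, x ∈ 𝒜 → (x ∘L adjoint x) ∘L x ∈ 𝒜

/-- The triple product `c c* c` as an element of `𝒜`. -/
noncomputable def cube (𝒜 : Submodule ℂ (H →L[ℂ] K)) (hA : JStarClosed 𝒜) (c : 𝒜) : 𝒜 :=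
  ⟨((c : H →L[ℂ] K) ∘L adjoint (c : H →L[ℂ] K)) ∘L (c : H →L[ℂ] K), hA c c.2⟩

/-- `D : 𝒜 → 𝒜` is a `J*`-derivation: it is `ℂ`-linear and satisfies
`D(c c* c) = D(c) c* c + c (D(c))* c + c c* D(c)`. -/
noncomputable def IsJStarDerivation (𝒜 : Submodule ℂ (H →L[ℂ] K)) (hA : JStarClosed 𝒜)
    (D : 𝒜 → 𝒜) : Prop :=
  (∀ a b : 𝒜, D (a + b) = D a + D b) ∧
  (∀ (z : ℂ) (a : 𝒜), D (z • a) = z • D a) ∧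
  (∀ c : 𝒜, (D (cube 𝒜 hA c) : H →L[ℂ] K) =
      ((D c : H →L[ℂ] K) ∘L adjoint (c : H →L[ℂ] K)) ∘L (c : H →L[ℂ] K) +
      ((c : H →L[ℂ] K) ∘L adjoint (D c : H →L[ℂ] K)) ∘L (c : H →L[ℂ] K) +
      ((c : H →L[ℂ] K) ∘L adjoint (c : H →L[ℂ] K)) ∘L (D c : H →L[ℂ] K))

/-- The defect of the generalized Jensen functional equation combined with the
`J*`-derivation identity, for a map `f : 𝒜 → 𝒜`, parameter `r` and scalar `μ`. -/
noncomputable def jensenDefect (𝒜 : Submodule ℂ (H →L[ℂ] K)) (hA : JStarClosed 𝒜)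
    (r : ℝ) (f : 𝒜 → 𝒜) (μ : ℂ) (a b c : 𝒜) : H →L[ℂ] K :=
  ((r : ℂ) * μ) • (f ((r : ℂ)⁻¹ • (a + b)) : H →L[ℂ] K) +
  ((r : ℂ) * μ) • (f ((r : ℂ)⁻¹ • (a - b)) : H →L[ℂ] K) -
  (2 : ℂ) • (f (μ • a) : H →L[ℂ] K) +
  (f (cube 𝒜 hA c) : H →L[ℂ] K) -
  ((f c : H →L[ℂ] K) ∘L adjoint (c : H →L[ℂ] K)) ∘L (c : H →L[ℂ] K) -
  ((c : H →L[ℂ] K) ∘L adjoint (f c : H →L[ℂ] K)) ∘L (c : H →L[ℂ] K) -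
  ((c : H →L[ℂ] K) ∘L adjoint (c : H →L[ℂ] K)) ∘L (f c : H →L[ℂ] K)

/-! Hyers' direct method. Taking `a = 2x`, `b = c = 0` in the defect inequality gives
`‖2 f x - f (2x)‖ ≤ θ 2^p/2 ‖x‖^p`, so `2⁻ⁿ f (2ⁿ x)` is Cauchy with ratio `2^p/2 < 1`, and its
limit `D` lies within `θ 2^p/(2 - 2^p) ‖x‖^p` of `f`. Applying the inequality at `2ⁿ a, 2ⁿ b, 2ⁿ c`
and dividing by `2ⁿ` (by `8ⁿ` for the triple-product part) shows in the limit that `D` is additive,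
commutes with unimodular scalars and satisfies the derivation identity. Additivity and
`𝕋`-homogeneity give `ℂ`-linearity because every complex number of modulus at most `2` is a sum of
two unimodular ones. Two such maps commute with `2ⁿ` and differ by `2⁻ⁿ O(2^{np})`, hence agree. -/
open Topology

theorem Real.two_rpow_lt_two {p : ℝ} (hp : p < 1) : (2 : ℝ) ^ p < 2 := by
  simpa using Real.rpow_lt_rpow_of_exponent_lt one_lt_two hp

theorem eq_of_tendsto_of_norm_sub_le_geometric {F : Type*} [NormedAddCommGroup F]
    {u v : ℕ → F} {a b : F} {C r : ℝ} (hu : Tendsto u atTop (𝓝 a)) (hv : Tendsto v atTop (𝓝 b))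
    (hr₀ : 0 ≤ r) (hr₁ : r < 1) (h : ∀ n, ‖u n - v n‖ ≤ C * r ^ n) : a = b := by
  have h₀ : Tendsto (fun n => u n - v n) atTop (𝓝 0) :=
    squeeze_zero_norm h (by simpa using (tendsto_pow_atTop_nhds_zero_of_lt_one hr₀ hr₁).const_mul C)
  exact sub_eq_zero.mp (tendsto_nhds_unique (hu.sub hv) h₀)

theorem Complex.exists_add_eq_of_norm_le_two {z : ℂ} (hz : ‖z‖ ≤ 2) :
    ∃ μ ν : ℂ, ‖μ‖ = 1 ∧ ‖ν‖ = 1 ∧ μ + ν = z := by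
  -- `z = ‖z‖ u` with `‖u‖ = 1`, and `‖z‖ = l + conj l` for the unit `l = ‖z‖/2 + i √(1 - ‖z‖²/4)`
  set t := ‖z‖ / 2 with ht_def
  have ht : t ^ 2 ≤ 1 := by
    have : 0 ≤ t := by positivity
    have : t ≤ 1 := by linarith
    nlinarith
  set u := exp (z.arg * I)
  set l : ℂ := t + √(1 - t ^ 2) * I
  have hl : ‖l‖ = 1 := by
    rw [norm_add_mul_I, Real.sq_sqrt (by linarith)]
    simp
  refine ⟨u * l, u * (starRingEnd ℂ l), ?_, ?_, ?_⟩
  · rw [norm_mul, norm_exp_ofReal_mul_I, hl, one_mul]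
  · rw [norm_mul, norm_exp_ofReal_mul_I, RCLike.norm_conj, hl, one_mul]
  · rw [← mul_add, add_conj]
    simp only [l, add_re, ofReal_re, mul_re, ofReal_im, I_re, I_im]
    conv_rhs => rw [← norm_mul_exp_arg_mul_I z]
    simp only [t]
    push_cast
    ring

theorem map_smul_of_map_add_of_map_unit_smul {E F : Type*} [AddCommGroup E] [Module ℂ E]
    [AddCommGroup F] [Module ℂ F] {D : E → F} (hadd : ∀ x y, D (x + y) = D x + D y)
    (hunit : ∀ μ : ℂ, ‖μ‖ = 1 → ∀ x, D (μ • x) = μ • D x) (z : ℂ) (x : E) :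
    D (z • x) = z • D x := by
  obtain ⟨N, hN⟩ := exists_nat_gt ‖z‖
  have hN₀ : (N : ℂ) ≠ 0 := by
    have : (0 : ℝ) < N := (norm_nonneg z).trans_lt hN
    exact_mod_cast this.ne'
  obtain ⟨μ, ν, hμ, hν, hμν⟩ := Complex.exists_add_eq_of_norm_le_two (z := z / N) (by
    rw [norm_div, Complex.norm_natCast, div_le_iff₀ ((norm_nonneg z).trans_lt hN)]
    linarith)
  have hw : D ((z / N) • x) = (z / N) • D x := by
    rw [← hμν, add_smul, hadd, hunit μ hμ, hunit ν hν, add_smul]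
  have hz : z • x = N • (z / N) • x := by
    rw [← Nat.cast_smul_eq_nsmul ℂ, smul_smul, mul_div_cancel₀ _ hN₀]
  have hnsmul : D (N • (z / N) • x) = N • D ((z / N) • x) :=
    map_nsmul (AddMonoidHom.mk' D hadd) N _
  rw [hz, hnsmul, hw, ← Nat.cast_smul_eq_nsmul ℂ, smul_smul, mul_div_cancel₀ _ hN₀]

section Hyers

variable {𝕜 E F : Type*} [RCLike 𝕜] [NormedAddCommGroup E] [Module 𝕜 E] [NormSMulClass 𝕜 E]
  [NormedAddCommGroup F] [Module 𝕜 F] [NormSMulClass 𝕜 F]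

variable (𝕜) in
noncomputable def hyersSeq (g : E → F) (n : ℕ) (x : E) : F :=
  ((2 : 𝕜) ^ n)⁻¹ • g ((2 : 𝕜) ^ n • x)

theorem norm_two_pow_smul_rpow (n : ℕ) (x : E) (p : ℝ) :
    ‖(2 : 𝕜) ^ n • x‖ ^ p = (2 ^ p) ^ n * ‖x‖ ^ p := by
  rw [norm_smul, norm_pow, RCLike.norm_ofNat, Real.mul_rpow (by positivity) (norm_nonneg x),
    Real.rpow_pow_comm zero_le_two]

theorem norm_inv_two_pow_smul_le {v : F} {C p : ℝ} (n : ℕ) (hv : ‖v‖ ≤ C * (2 ^ p) ^ n) :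
    ‖((2 : 𝕜) ^ n)⁻¹ • v‖ ≤ C * (2 ^ p / 2) ^ n := by
  rw [norm_smul, norm_inv, norm_pow, RCLike.norm_ofNat, div_pow, ← mul_div_assoc,
    inv_mul_eq_div]
  gcongr

theorem dist_hyersSeq_succ_le {g : E → F} {δ p : ℝ}
    (hg : ∀ x, ‖(2 : 𝕜) • g x - g ((2 : 𝕜) • x)‖ ≤ δ * ‖x‖ ^ p) (x : E) (n : ℕ) :
    dist (hyersSeq 𝕜 g n x) (hyersSeq 𝕜 g (n + 1) x) ≤ δ / 2 * ‖x‖ ^ p * (2 ^ p / 2) ^ n := by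
  have e : hyersSeq 𝕜 g n x - hyersSeq 𝕜 g (n + 1) x =
      ((2 : 𝕜) ^ n)⁻¹ • (2 : 𝕜)⁻¹ •
        ((2 : 𝕜) • g ((2 : 𝕜) ^ n • x) - g ((2 : 𝕜) • (2 : 𝕜) ^ n • x)) := by
    rw [smul_smul (2 : 𝕜), ← pow_succ']
    simp only [hyersSeq]
    match_scalars <;> field_simp; ring
  rw [dist_eq_norm, e]
  apply norm_inv_two_pow_smul_le
  rw [norm_smul, norm_inv, RCLike.norm_ofNat]
  have := hg ((2 : 𝕜) ^ n • x)
  rw [norm_two_pow_smul_rpow] at this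
  linarith

theorem exists_tendsto_hyersSeq [CompleteSpace F] {g : E → F} {δ p : ℝ}
    (hg : ∀ x, ‖(2 : 𝕜) • g x - g ((2 : 𝕜) • x)‖ ≤ δ * ‖x‖ ^ p) (hp : p < 1) :
    ∃ D : E → F, (∀ x, Tendsto (fun n => hyersSeq 𝕜 g n x) atTop (𝓝 (D x))) ∧
      ∀ x, ‖g x - D x‖ ≤ δ / (2 - 2 ^ p) * ‖x‖ ^ p := by
  have hp₂ := Real.two_rpow_lt_two hp
  have hr : (2 : ℝ) ^ p / 2 < 1 := by linarith
  choose D hD using fun x =>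
    cauchySeq_tendsto_of_complete (cauchySeq_of_le_geometric _ _ hr (dist_hyersSeq_succ_le hg x))
  refine ⟨D, hD, fun x => ?_⟩
  have h := dist_le_of_le_geometric_of_tendsto₀ _ _ hr (dist_hyersSeq_succ_le hg x) (hD x)
  rw [dist_eq_norm] at h
  convert h using 1
  · simp [hyersSeq]
  · field_simp

theorem map_add_of_tendsto_hyersSeq {g D : E → F} {ε p : ℝ} (hp : p < 1)
    (hg : ∀ x y, ‖g x + g y - g (x + y)‖ ≤ ε * (‖x + y‖ ^ p + ‖x - y‖ ^ p))
    (hD : ∀ x, Tendsto (fun n => hyersSeq 𝕜 g n x) atTop (𝓝 (D x))) (x y : E) :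
    D (x + y) = D x + D y := by
  refine (eq_of_tendsto_of_norm_sub_le_geometric ((hD x).add (hD y)) (hD (x + y))
    (C := ε * (‖x + y‖ ^ p + ‖x - y‖ ^ p)) (r := 2 ^ p / 2) (by positivity)
    (by linarith [Real.two_rpow_lt_two hp]) fun n => ?_).symm
  simp only [hyersSeq, ← smul_add, ← smul_sub]
  apply norm_inv_two_pow_smul_le
  have := hg ((2 : 𝕜) ^ n • x) ((2 : 𝕜) ^ n • y)
  rw [← smul_add, ← smul_sub, norm_two_pow_smul_rpow, norm_two_pow_smul_rpow] at this
  exact this.trans_eq (by ring)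

theorem map_smul_of_tendsto_hyersSeq {g D : E → F} {ε p : ℝ} (hp : p < 1) (μ : 𝕜)
    (hg : ∀ x, ‖μ • g x - g (μ • x)‖ ≤ ε * ‖x‖ ^ p)
    (hD : ∀ x, Tendsto (fun n => hyersSeq 𝕜 g n x) atTop (𝓝 (D x))) (x : E) :
    D (μ • x) = μ • D x := by
  refine (eq_of_tendsto_of_norm_sub_le_geometric ((hD x).const_smul μ) (hD (μ • x))
    (C := ε * ‖x‖ ^ p) (r := 2 ^ p / 2) (by positivity)
    (by linarith [Real.two_rpow_lt_two hp]) fun n => ?_).symm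
  simp only [hyersSeq, smul_comm μ, ← smul_sub]
  apply norm_inv_two_pow_smul_le
  have := hg ((2 : 𝕜) ^ n • x)
  rw [smul_comm μ ((2 : 𝕜) ^ n) x, norm_two_pow_smul_rpow] at this
  exact this.trans_eq (by ring)

theorem eq_of_norm_sub_le_rpow {g D D' : E → F} {C p : ℝ} (hp : p < 1)
    (hD : ∀ (n : ℕ) x, D ((2 : 𝕜) ^ n • x) = (2 : 𝕜) ^ n • D x)
    (hD' : ∀ (n : ℕ) x, D' ((2 : 𝕜) ^ n • x) = (2 : 𝕜) ^ n • D' x)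
    (h : ∀ x, ‖g x - D x‖ ≤ C * ‖x‖ ^ p) (h' : ∀ x, ‖g x - D' x‖ ≤ C * ‖x‖ ^ p) : D = D' := by
  funext x
  refine eq_of_tendsto_of_norm_sub_le_geometric tendsto_const_nhds tendsto_const_nhds
    (C := 2 * C * ‖x‖ ^ p) (r := 2 ^ p / 2) (by positivity)
    (by linarith [Real.two_rpow_lt_two hp]) fun n => ?_
  have e : D x - D' x = ((2 : 𝕜) ^ n)⁻¹ • ((g ((2 : 𝕜) ^ n • x) - D' ((2 : 𝕜) ^ n • x)) -
      (g ((2 : 𝕜) ^ n • x) - D ((2 : 𝕜) ^ n • x))) := by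
    rw [hD, hD', sub_sub_sub_cancel_left, ← smul_sub, inv_smul_smul₀ (by simp)]
  rw [e]
  apply norm_inv_two_pow_smul_le
  refine (norm_sub_le _ _).trans ?_
  have h₁ := h' ((2 : 𝕜) ^ n • x)
  have h₂ := h ((2 : 𝕜) ^ n • x)
  rw [norm_two_pow_smul_rpow] at h₁ h₂
  linarith

end Hyers

section JStar

noncomputable def cubeDeriv (c y : H →L[ℂ] K) : H →L[ℂ] K :=
  (y ∘L adjoint c) ∘L c + (c ∘L adjoint y) ∘L c + (c ∘L adjoint c) ∘L y

theorem continuous_cubeDeriv (c : H →L[ℂ] K) : Continuous (cubeDeriv c) := by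
  have hadj := (adjoint : (H →L[ℂ] K) ≃ₗᵢ⋆[ℂ] (K →L[ℂ] H)).continuous
  unfold cubeDeriv
  fun_prop

theorem cubeDeriv_smul_left {z : ℂ} (hz : IsSelfAdjoint z) (c y : H →L[ℂ] K) :
    cubeDeriv (z • c) y = z ^ 2 • cubeDeriv c y := by
  simp only [cubeDeriv, map_smulₛₗ, starRingEnd_apply, hz.star_eq, comp_smul, smul_comp, smul_smul]
  module

theorem cubeDeriv_smul_right {z : ℂ} (hz : IsSelfAdjoint z) (c y : H →L[ℂ] K) :
    cubeDeriv c (z • y) = z • cubeDeriv c y := by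
  simp only [cubeDeriv, map_smulₛₗ, starRingEnd_apply, hz.star_eq, comp_smul, smul_comp]
  module

-- `Submodule.normedSpace` acts by a scalar multiplication that is not reducibly the submodule's
-- own, so without this instance `NormSMulClass ℂ 𝒜` is not found.
instance Submodule.instNormSMulClass {𝕜 E : Type*} [NormedField 𝕜] [SeminormedAddCommGroup E]
    [NormedSpace 𝕜 E] (s : Submodule 𝕜 E) : NormSMulClass 𝕜 s :=
  ⟨fun a x => norm_smul a (x : E)⟩

variable {𝒜 : Submodule ℂ (H →L[ℂ] K)} {hA : JStarClosed 𝒜}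

theorem cube_smul {z : ℂ} (hz : IsSelfAdjoint z) (c : 𝒜) :
    cube 𝒜 hA (z • c) = z ^ 3 • cube 𝒜 hA c := by
  ext1
  simp only [cube, SetLike.val_smul, map_smulₛₗ, starRingEnd_apply, hz.star_eq, comp_smul,
    smul_comp, smul_smul]
  ring_nf

variable (𝒜 hA) in
def IsApproxJStarDerivation (p θ : ℝ) (f : 𝒜 → 𝒜) : Prop :=
  ∀ μ : ℂ, ‖μ‖ = 1 → ∀ a b c : 𝒜,
    ‖jensenDefect 𝒜 hA 2 f μ a b c‖ ≤ θ * (‖a‖ ^ p + ‖b‖ ^ p + ‖c‖ ^ p)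

theorem cube_zero : cube 𝒜 hA 0 = 0 := by
  ext1
  simp [cube]

theorem jensenDefect_zero_zero_zero (f : 𝒜 → 𝒜) :
    jensenDefect 𝒜 hA 2 f 1 0 0 0 = (3 : ℂ) • (f 0 : H →L[ℂ] K) := by
  simp only [jensenDefect, cube_zero, Complex.ofReal_ofNat, add_zero, sub_zero, smul_zero,
    mul_one, ZeroMemClass.coe_zero, comp_zero, zero_comp, map_zero]
  module

theorem jensenDefect_add_sub {f : 𝒜 → 𝒜} (hf₀ : f 0 = 0) (x y : 𝒜) :
    jensenDefect 𝒜 hA 2 f 1 (x + y) (x - y) 0 =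
      (2 : ℂ) • ((f x + f y - f (x + y) : 𝒜) : H →L[ℂ] K) := by
  have hx : (2 : ℂ)⁻¹ • (x + y + (x - y)) = x := by module
  have hy : (2 : ℂ)⁻¹ • (x + y - (x - y)) = y := by module
  simp only [jensenDefect, cube_zero, hf₀, hx, hy, Complex.ofReal_ofNat, one_smul, mul_one,
    ZeroMemClass.coe_zero, comp_zero, map_zero, sub_zero, add_zero,
    Submodule.coe_add, Submodule.coe_sub]
  module

theorem jensenDefect_self {f : 𝒜 → 𝒜} (hf₀ : f 0 = 0) (μ : ℂ) (x : 𝒜) :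
    jensenDefect 𝒜 hA 2 f μ x x 0 = (2 : ℂ) • ((μ • f x - f (μ • x) : 𝒜) : H →L[ℂ] K) := by
  have hx : (2 : ℂ)⁻¹ • (x + x) = x := by module
  simp only [jensenDefect, cube_zero, hf₀, hx, sub_self, smul_zero, Complex.ofReal_ofNat,
    ZeroMemClass.coe_zero, comp_zero, map_zero, sub_zero, add_zero,
    Submodule.coe_sub, SetLike.val_smul]
  module

theorem jensenDefect_zero_zero {f : 𝒜 → 𝒜} (hf₀ : f 0 = 0) (c : 𝒜) :
    jensenDefect 𝒜 hA 2 f 1 0 0 c = (f (cube 𝒜 hA c) : H →L[ℂ] K) - cubeDeriv c (f c) := by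
  simp only [jensenDefect, cubeDeriv, hf₀, add_zero, sub_zero, smul_zero, ZeroMemClass.coe_zero]
  abel

namespace IsApproxJStarDerivation

variable {p θ : ℝ} {f : 𝒜 → 𝒜}

theorem map_zero (hf : IsApproxJStarDerivation 𝒜 hA p θ f) (hp : 0 < p) : f 0 = 0 := by
  have h := hf 1 norm_one 0 0 0
  rw [jensenDefect_zero_zero_zero, norm_smul, RCLike.norm_ofNat, norm_zero (E := 𝒜),
    Real.zero_rpow hp.ne', add_zero, add_zero, mul_zero] at h
  exact Subtype.ext (norm_le_zero_iff.mp (by linarith) : (f 0 : H →L[ℂ] K) = 0)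

theorem norm_map_add_sub_le (hf : IsApproxJStarDerivation 𝒜 hA p θ f) (hp : 0 < p) (x y : 𝒜) :
    ‖f x + f y - f (x + y)‖ ≤ θ / 2 * (‖x + y‖ ^ p + ‖x - y‖ ^ p) := by
  have h := hf 1 norm_one (x + y) (x - y) 0
  rw [jensenDefect_add_sub (hf.map_zero hp), norm_smul, norm_zero (E := 𝒜), Real.zero_rpow hp.ne',
    add_zero, RCLike.norm_ofNat] at h
  change 2 * ‖f x + f y - f (x + y)‖ ≤ _ at h
  linarith

theorem norm_two_smul_map_sub_le (hf : IsApproxJStarDerivation 𝒜 hA p θ f) (hp : 0 < p)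
    (x : 𝒜) : ‖(2 : ℂ) • f x - f ((2 : ℂ) • x)‖ ≤ θ * 2 ^ p / 2 * ‖x‖ ^ p := by
  have h := hf.norm_map_add_sub_le hp x x
  have h2x : ‖(2 : ℂ) • x‖ ^ p = 2 ^ p * ‖x‖ ^ p := by
    simpa using norm_two_pow_smul_rpow (𝕜 := ℂ) 1 x p
  rw [sub_self, norm_zero (E := 𝒜), Real.zero_rpow hp.ne', add_zero, ← two_smul ℂ x, h2x] at h
  rw [two_smul]
  linarith

theorem norm_smul_map_sub_map_smul_le (hf : IsApproxJStarDerivation 𝒜 hA p θ f) (hp : 0 < p)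
    {μ : ℂ} (hμ : ‖μ‖ = 1) (x : 𝒜) : ‖μ • f x - f (μ • x)‖ ≤ θ * ‖x‖ ^ p := by
  have h := hf μ hμ x x 0
  rw [jensenDefect_self (hf.map_zero hp), norm_smul, norm_zero (E := 𝒜), Real.zero_rpow hp.ne',
    add_zero, RCLike.norm_ofNat] at h
  change 2 * ‖μ • f x - f (μ • x)‖ ≤ _ at h
  linarith

theorem norm_map_cube_sub_cubeDeriv_le (hf : IsApproxJStarDerivation 𝒜 hA p θ f) (hp : 0 < p)
    (c : 𝒜) : ‖(f (cube 𝒜 hA c) : H →L[ℂ] K) - cubeDeriv c (f c)‖ ≤ θ * ‖c‖ ^ p := by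
  have h := hf 1 norm_one 0 0 c
  rwa [jensenDefect_zero_zero (hf.map_zero hp), norm_zero (E := 𝒜), Real.zero_rpow hp.ne', zero_add,
    zero_add] at h

end IsApproxJStarDerivation

theorem coe_map_cube_eq_cubeDeriv {f D : 𝒜 → 𝒜} {ε p : ℝ} (hp : p < 1)
    (hf : ∀ c, ‖(f (cube 𝒜 hA c) : H →L[ℂ] K) - cubeDeriv c (f c)‖ ≤ ε * ‖c‖ ^ p)
    (hD : ∀ x, Tendsto (fun n => hyersSeq ℂ f n x) atTop (𝓝 (D x))) (c : 𝒜) :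
    (D (cube 𝒜 hA c) : H →L[ℂ] K) = cubeDeriv c (D c) := by
  have hu : Tendsto (fun n => ((hyersSeq ℂ f (3 * n) (cube 𝒜 hA c) : 𝒜) : H →L[ℂ] K)) atTop
      (𝓝 (D (cube 𝒜 hA c))) :=
    (continuous_subtype_val.tendsto _).comp
      ((hD _).comp (strictMono_mul_left_of_pos (three_pos : (0 : ℕ) < 3)).tendsto_atTop)
  have hv : Tendsto (fun n => cubeDeriv c (hyersSeq ℂ f n c : 𝒜)) atTop
      (𝓝 (cubeDeriv c (D c : H →L[ℂ] K))) :=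
    ((continuous_cubeDeriv _).tendsto _).comp ((continuous_subtype_val.tendsto _).comp (hD c))
  refine eq_of_tendsto_of_norm_sub_le_geometric hu hv (C := ε * ‖c‖ ^ p) (r := 2 ^ p / 8)
    (by positivity) (by linarith [Real.two_rpow_lt_two hp]) fun n => ?_
  have h2 : IsSelfAdjoint ((2 : ℂ) ^ n) := (IsSelfAdjoint.ofNat 2).pow n
  -- `cube` is cubic and `cubeDeriv` quadratic in `c`: both terms rescale to the defect at `2ⁿ c`
  have e : ((hyersSeq ℂ f (3 * n) (cube 𝒜 hA c) : 𝒜) : H →L[ℂ] K) -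
      cubeDeriv c (hyersSeq ℂ f n c : 𝒜) =
      (((2 : ℂ) ^ n) ^ 3)⁻¹ • ((f (cube 𝒜 hA ((2 : ℂ) ^ n • c)) : H →L[ℂ] K) -
        cubeDeriv ((2 : ℂ) ^ n • c : 𝒜) (f ((2 : ℂ) ^ n • c))) := by
    rw [cube_smul h2, SetLike.val_smul, cubeDeriv_smul_left h2, hyersSeq, hyersSeq,
      SetLike.val_smul, SetLike.val_smul, cubeDeriv_smul_right h2.inv₀, pow_mul', smul_sub,
      smul_smul]
    congr 2
    field_simp
  have hbound := hf ((2 : ℂ) ^ n • c)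
  have h3 : ‖(2 : ℂ) ^ n • c‖ ^ p = (2 ^ p) ^ n * ‖c‖ ^ p := norm_two_pow_smul_rpow n c p
  rw [h3] at hbound
  rw [e, norm_smul, norm_inv, norm_pow, norm_pow, RCLike.norm_ofNat, inv_mul_eq_div]
  calc _ ≤ ε * ((2 ^ p) ^ n * ‖c‖ ^ p) / (2 ^ n) ^ 3 := by gcongr
    _ = _ := by rw [← pow_mul', pow_mul, div_pow]; norm_num; ring

end JStar

/-- Corollary 3.3 (Hyers–Ulam–Rassias stability of `J*`-derivations via the fixed point
alternative, `r = 2`): there is a unique `J*`-derivation `D` with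
`‖f(a) − D(a)‖ ≤ 2^p θ/(2 − 2^p) ‖a‖^p`, given by `D(a) = lim 2⁻ⁿ f(2ⁿ a)`. -/
theorem HUR_stability_JStarDerivation_fixedPoint
    (𝒜 : Submodule ℂ (H →L[ℂ] K)) (hclosed : IsClosed (𝒜 : Set (H →L[ℂ] K)))
    (hA : JStarClosed 𝒜)
    (p θ : ℝ) (hp0 : 0 < p) (hp1 : p < 1) (hθ : 0 ≤ θ)
    (f : 𝒜 → 𝒜)
    (hineq : ∀ (μ : ℂ), ‖μ‖ = 1 → ∀ a b c : 𝒜,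
      ‖jensenDefect 𝒜 hA 2 f μ a b c‖ ≤ θ * (‖a‖ ^ p + ‖b‖ ^ p + ‖c‖ ^ p)) :
    ∃ D : 𝒜 → 𝒜,
      (IsJStarDerivation 𝒜 hA D ∧
        (∀ a : 𝒜, ‖f a - D a‖ ≤ 2 ^ p * θ / (2 - 2 ^ p) * ‖a‖ ^ p) ∧
        (∀ a : 𝒜, Tendsto (fun n : ℕ => ((2 : ℂ) ^ n)⁻¹ • f (((2 : ℂ) ^ n) • a))
          atTop (nhds (D a)))) ∧
      (∀ D' : 𝒜 → 𝒜,
        (IsJStarDerivation 𝒜 hA D' ∧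
          (∀ a : 𝒜, ‖f a - D' a‖ ≤ 2 ^ p * θ / (2 - 2 ^ p) * ‖a‖ ^ p)) → D' = D) := by
  have : CompleteSpace 𝒜 := hclosed.completeSpace_coe
  have hf : IsApproxJStarDerivation 𝒜 hA p θ f := hineq
  have hHyers := exists_tendsto_hyersSeq (g := f) (hf.norm_two_smul_map_sub_le hp0) hp1
  obtain ⟨D, hD, hfD⟩ := hHyers
  have hadd : ∀ x y, D (x + y) = D x + D y :=
    map_add_of_tendsto_hyersSeq (g := f) hp1 (hf.norm_map_add_sub_le hp0) hD
  have hsmul : ∀ (z : ℂ) x, D (z • x) = z • D x :=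
    map_smul_of_map_add_of_map_unit_smul hadd fun μ hμ =>
      map_smul_of_tendsto_hyersSeq (g := f) hp1 μ (hf.norm_smul_map_sub_map_smul_le hp0 hμ) hD
  have hfD' : ∀ a, ‖f a - D a‖ ≤ 2 ^ p * θ / (2 - 2 ^ p) * ‖a‖ ^ p := fun a => by
    have := Real.two_rpow_lt_two hp1
    refine (hfD a).trans (mul_le_mul_of_nonneg_right ?_ (by positivity))
    rw [div_div, mul_comm θ]
    exact div_le_div_of_nonneg_left (by positivity) (by linarith) (by linarith)
  have hder := coe_map_cube_eq_cubeDeriv hp1 (hf.norm_map_cube_sub_cubeDeriv_le hp0) hD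
  refine ⟨D, ⟨⟨hadd, hsmul, hder⟩, hfD', hD⟩, ?_⟩
  rintro D' ⟨⟨-, hsmul', -⟩, hfD''⟩
  exact eq_of_norm_sub_le_rpow (g := f) hp1 (fun n x => hsmul' _ x) (fun n x => hsmul _ x) hfD'' hfD'
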